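/- arXiv:2603.08669 — 12 statements merged into one kernel-verified Lean document; each statement's English description precedes it below -/
import Mathlib

section
/- Let f : M → N be a morphism of abelian groups and p a prime number. Then f is divisible by p in Hom(M,N) (i.e., there exists g : M → N with f = p·g) if and only if f is seemingly divisible by p, i.e., f vanishes on the p-torsion of M and the image of f is contained in pN. -/
/-- A morphism of abelian groups `f : M → N` is divisible by a prime `p`
(i.e. `f = p • g` for some homomorphism `g`) if and only if it is seemingly
divisible by `p`: it vanishes on the `p`-torsion and its image lands in `pN`. -/
theorem stmt0 {M N : Type*} [AddCommGroup M] [AddCommGroup N]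
    (p : ℕ) (hp : p.Prime) (f : M →+ N) :
    (∃ g : M →+ N, ∀ m : M, f m = p • g m) ↔
      ((∀ m : M, p • m = 0 → f m = 0) ∧ (∀ m : M, ∃ n : N, f m = p • n)) := by
  constructor
  · rintro ⟨g, hg⟩
    refine ⟨fun m hm => ?_, fun m => ⟨g m, hg m⟩⟩
    rw [hg m, ← map_nsmul, hm, map_zero]
  · rintro ⟨h1, h2⟩
    haveI : Fact p.Prime := ⟨hp⟩
    -- the pullback subgroup E = {(m, n) | f m = p • n}
    set E : AddSubgroup (M × N) :=
      { carrier := {x | f x.1 = p • x.2}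
        add_mem' := by
          rintro a b (ha : f a.1 = _) (hb : f b.1 = _)
          show f (a.1 + b.1) = p • (a.2 + b.2)
          rw [map_add, ha, hb, smul_add]
        zero_mem' := by simp
        neg_mem' := by
          rintro a (ha : f a.1 = _)
          show f (-a.1) = p • (-a.2)
          rw [map_neg, ha, smul_neg] } with hE
    have memE : ∀ x : M × N, x ∈ E ↔ f x.1 = p • x.2 := fun x => Iff.rfl
    -- projection to M
    set π : E →+ M := (AddMonoidHom.fst M N).comp E.subtype with hπ
    have πdef : ∀ e : E, π e = (e : M × N).1 := fun e => rfl
    have πsurj : Function.Surjective π := by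
      intro m
      obtain ⟨n, hn⟩ := h2 m
      exact ⟨⟨(m, n), hn⟩, rfl⟩
    -- the subgroup pE
    set mulP : E →+ E :=
      { toFun := fun e => p • e
        map_zero' := smul_zero p
        map_add' := fun a b => smul_add p a b } with hmulP
    set S : AddSubgroup E := mulP.range with hS
    -- key: pE ∩ ker π = 0
    have key : ∀ x : E, x ∈ S → π x = 0 → x = 0 := by
      rintro x ⟨e, rfl⟩ hx
      have hx1 : p • (e : M × N).1 = 0 := hx
      have he : f (e : M × N).1 = p • (e : M × N).2 := e.2
      have hfz : f (e : M × N).1 = 0 := h1 _ hx1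
      have hx2 : p • (e : M × N).2 = 0 := by rw [← he, hfz]
      have : ((mulP e : E) : M × N) = 0 := by
        show p • (e : M × N) = 0
        rw [Prod.ext_iff]
        exact ⟨hx1, hx2⟩
      exact Subtype.ext this
    -- quotient E / pE, a ZMod p vector space
    set Q := E ⧸ S with hQ
    haveI : Module (ZMod p) Q := QuotientAddGroup.zmodModule (fun x => ⟨x, rfl⟩)
    set mk : E →+ Q := QuotientAddGroup.mk' S with hmk
    have mksurj : Function.Surjective mk := QuotientAddGroup.mk'_surjective S
    set Vbar : Submodule (ZMod p) Q := AddSubgroup.toZModSubmodule p (π.ker.map mk) with hVbar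
    obtain ⟨Wbar, hW⟩ := Submodule.exists_isCompl Vbar
    set W : AddSubgroup E := Wbar.toAddSubgroup.comap mk with hWdef
    have memW : ∀ e : E, e ∈ W ↔ mk e ∈ Wbar := fun e => Iff.rfl
    -- ker π ∩ W = 0
    have inf_eq : ∀ e : E, e ∈ π.ker → e ∈ W → e = 0 := by
      intro e he hw
      have hv : mk e ∈ Vbar := by
        exact AddSubgroup.mem_map_of_mem mk he
      have : mk e ∈ Vbar ⊓ Wbar := ⟨hv, hw⟩
      rw [hW.inf_eq_bot] at this
      have hmem : e ∈ S := (QuotientAddGroup.eq_zero_iff e).mp this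
      exact key e hmem he
    -- ker π ⊔ W = ⊤
    have sup_eq : ∀ e : E, ∃ v ∈ π.ker, ∃ w ∈ W, v + w = e := by
      intro e
      have : mk e ∈ Vbar ⊔ Wbar := by rw [hW.sup_eq_top]; trivial
      rw [Submodule.mem_sup] at this
      obtain ⟨a, ha, b, hb, hab⟩ := this
      obtain ⟨v, hv, rfl⟩ := ha
      refine ⟨v, hv, e - v, ?_, by abel⟩
      show mk (e - v) ∈ Wbar
      rw [map_sub]
      rw [← hab]
      simpa using hb
    -- π restricted to W is bijective
    set πW : W →+ M := π.comp W.subtype with hπW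
    have πWinj : Function.Injective πW := by
      rw [injective_iff_map_eq_zero]
      intro w hw
      have : (w : E) = 0 := inf_eq w hw w.2
      exact Subtype.ext this
    have πWsurj : Function.Surjective πW := by
      intro m
      obtain ⟨e, he⟩ := πsurj m
      obtain ⟨v, hv, w, hw, hvw⟩ := sup_eq e
      refine ⟨⟨w, hw⟩, ?_⟩
      have : π v + π w = m := by rw [← map_add, hvw, he]
      rw [AddMonoidHom.mem_ker] at hv
      simpa [πW, hv] using this
    set eqv : W ≃+ M := AddEquiv.ofBijective πW ⟨πWinj, πWsurj⟩ with heqv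
    refine ⟨((AddMonoidHom.snd M N).comp (E.subtype.comp W.subtype)).comp
      eqv.symm.toAddMonoidHom, fun m => ?_⟩
    set w : W := eqv.symm m with hw
    have h1' : πW w = m := by
      show eqv w = m
      rw [hw, AddEquiv.apply_symm_apply]
    have h2' : f (((w : E) : M × N)).1 = p • (((w : E) : M × N)).2 := (w : E).2
    have h3' : (((w : E) : M × N)).1 = m := h1'
    rw [h3'] at h2'
    exact h2'
end

section
/- Let R be a commutative ring, x ∈ R a non-zero divisor, and f : M → N a map of R-modules such that f(M) ⊆ xN and f vanishes on the x-torsion of M. If M/xM is a projective R/xR-module, then f is divisible by x, i.e., there exists g : M → N with f = x·g. -/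
open Pointwise

/-- If `x` is a non-zero divisor, `f : M → N` is seemingly divisible by `x`
(vanishes on `x`-torsion and has image in `xN`), and `M/xM` is a projective
`R/x`-module, then `f` is divisible by `x`. -/
theorem stmt1 {R : Type*} [CommRing R] (x : R) (hx : ∀ r : R, x * r = 0 → r = 0)
    {M N : Type*} [AddCommGroup M] [Module R M] [AddCommGroup N] [Module R N]
    (f : M →ₗ[R] N)
    (h1 : ∀ m : M, x • m = 0 → f m = 0)
    (h2 : ∀ m : M, ∃ n : N, f m = x • n)
    (hproj : Module.Projective (R ⧸ Ideal.span {x})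
      (M ⧸ (x • (⊤ : Submodule R M)))) :
    ∃ g : M →ₗ[R] N, f = x • g := by
  classical
  -- the pullback submodule P = {(m, n) | f m = x • n}
  set L : M × N →ₗ[R] N := f.comp (LinearMap.fst R M N) - x • (LinearMap.snd R M N) with hL
  set P : Submodule R (M × N) := LinearMap.ker L with hP
  have memP : ∀ p : M × N, p ∈ P ↔ f p.1 = x • p.2 := by
    intro p
    simp [hP, hL, LinearMap.mem_ker, sub_eq_zero]
  set pr1 : P →ₗ[R] M := (LinearMap.fst R M N).comp P.subtype with hpr1
  have hpr1surj : Function.Surjective pr1 := by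
    intro m
    obtain ⟨n, hn⟩ := h2 m
    exact ⟨⟨(m, n), (memP (m, n)).2 hn⟩, rfl⟩
  -- quotient map
  have hle : x • (⊤ : Submodule R P) ≤ (x • (⊤ : Submodule R M)).comap pr1 := by
    rintro p hp
    obtain ⟨q, -, rfl⟩ := hp
    exact Submodule.smul_mem_pointwise_smul _ _ _ trivial
  set pr1q : (P ⧸ (x • (⊤ : Submodule R P))) →ₗ[R] (M ⧸ (x • (⊤ : Submodule R M))) :=
    Submodule.mapQ _ _ pr1 hle with hpr1q
  have halg : Function.Surjective (algebraMap R (R ⧸ Ideal.span {x})) :=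
    Ideal.Quotient.mk_surjective
  set pr1' := LinearMap.extendScalarsOfSurjective halg pr1q with hpr1'
  have hsurj' : Function.Surjective pr1' := by
    intro u
    obtain ⟨m, rfl⟩ := Submodule.mkQ_surjective _ u
    obtain ⟨p, rfl⟩ := hpr1surj m
    exact ⟨(x • (⊤ : Submodule R P)).mkQ p, by
      simp [hpr1', LinearMap.extendScalarsOfSurjective_apply, hpr1q, Submodule.mapQ_apply]⟩
  obtain ⟨σ, hσ⟩ := Module.projective_lifting_property (h := hproj) pr1' LinearMap.id hsurj'
  -- the submodule of P on which pr1 is bijective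
  set S : Submodule R P :=
    ((LinearMap.range σ).restrictScalars R).comap (x • (⊤ : Submodule R P)).mkQ with hS
  set e : S →ₗ[R] M := pr1.comp S.subtype with he
  have hker : ∀ p : P, x • (p : M × N).1 = 0 → x • p = 0 := by
    intro p hp
    have h0 : f (p : M × N).1 = x • (p : M × N).2 := (memP _).1 p.2
    have h1' : f (p : M × N).1 = 0 := h1 _ hp
    have : (↑(x • p) : M × N) = 0 := by
      ext
      · exact hp
      · exact (h1' ▸ h0).symm
    exact Subtype.ext this
  have hinj : Function.Injective e := by
    intro s t hst
    rw [← sub_eq_zero] at hst ⊢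
    set p : P := (s : P) - (t : P) with hp
    have hp1 : (p : M × N).1 = 0 := by
      simpa [he, hpr1, hp] using hst
    have hpm : p ∈ S := (Submodule.sub_mem S s.2 t.2 : ((s : P) - (t : P)) ∈ S)
    obtain ⟨u, hu⟩ := hpm
    have hu0 : u = 0 := by
      have : pr1' (σ u) = u := by
        have := LinearMap.congr_fun hσ u
        simpa using this
      rw [hu] at this
      have : (x • (⊤ : Submodule R M)).mkQ (pr1 p) = u := by
        simpa [hpr1', LinearMap.extendScalarsOfSurjective_apply, hpr1q,
          Submodule.mapQ_apply] using this
      rw [← this]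
      have : pr1 p = 0 := by simpa [hpr1] using hp1
      simp [this]
    rw [hu0, map_zero] at hu
    have hpx : p ∈ x • (⊤ : Submodule R P) := by
      exact (Submodule.Quotient.mk_eq_zero _).1 hu.symm
    obtain ⟨q, -, hq'⟩ := hpx
    have hq'' : x • q = p := hq'
    have hq1 : x • ((q : P) : M × N).1 = 0 := by
      have : ((x • q : P) : M × N).1 = 0 := by rw [hq'']; exact hp1
      simpa using this
    have : x • q = 0 := hker q hq1
    have : (s : P) - (t : P) = 0 := by rw [← hp, ← hq'', this]
    exact Subtype.ext this
  have hsurjS : Function.Surjective e := by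
    intro m
    obtain ⟨p₀, hp₀⟩ := Submodule.mkQ_surjective (x • (⊤ : Submodule R P))
      (σ ((x • (⊤ : Submodule R M)).mkQ m))
    have hσm : pr1' (σ ((x • (⊤ : Submodule R M)).mkQ m)) = (x • (⊤ : Submodule R M)).mkQ m := by
      simpa using LinearMap.congr_fun hσ ((x • (⊤ : Submodule R M)).mkQ m)
    have hmm : (x • (⊤ : Submodule R M)).mkQ (pr1 p₀) = (x • (⊤ : Submodule R M)).mkQ m := by
      rw [← hσm, ← hp₀]
      simp [hpr1', LinearMap.extendScalarsOfSurjective_apply, hpr1q, Submodule.mapQ_apply]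
    have hdiff : pr1 p₀ - m ∈ x • (⊤ : Submodule R M) := by
      rw [← Submodule.Quotient.mk_eq_zero (x • (⊤ : Submodule R M))]
      rw [Submodule.Quotient.mk_sub]
      rw [show (Submodule.Quotient.mk (pr1 p₀) : M ⧸ (x • (⊤ : Submodule R M)))
        = (x • (⊤ : Submodule R M)).mkQ (pr1 p₀) from rfl,
        show (Submodule.Quotient.mk m : M ⧸ (x • (⊤ : Submodule R M)))
        = (x • (⊤ : Submodule R M)).mkQ m from rfl, hmm, sub_self]
    obtain ⟨m', -, hm'⟩ := hdiff
    have hm'' : x • m' = pr1 p₀ - m := hm'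
    obtain ⟨q, hq⟩ := hpr1surj m'
    set p : P := p₀ - x • q with hpdef
    have hpS : p ∈ S := by
      have : (x • (⊤ : Submodule R P)).mkQ p = σ ((x • (⊤ : Submodule R M)).mkQ m) := by
        rw [hpdef, map_sub, hp₀]
        have : (x • (⊤ : Submodule R P)).mkQ (x • q) = 0 := by
          rw [Submodule.mkQ_apply, Submodule.Quotient.mk_eq_zero]
          exact Submodule.smul_mem_pointwise_smul _ _ _ trivial
        rw [this, sub_zero]
      exact ⟨(x • (⊤ : Submodule R M)).mkQ m, this.symm⟩
    refine ⟨⟨p, hpS⟩, ?_⟩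
    have : pr1 p = m := by
      rw [hpdef, map_sub, map_smul, hq, hm'']
      abel
    simpa [he] using this
  set ee := LinearEquiv.ofBijective e ⟨hinj, hsurjS⟩ with hee
  set g : M →ₗ[R] N :=
    (LinearMap.snd R M N).comp (P.subtype.comp (S.subtype.comp (ee.symm : M →ₗ[R] S))) with hg
  refine ⟨g, ?_⟩
  ext m
  have hsm : e (ee.symm m) = m := ee.apply_symm_apply m
  set p : P := (↑(ee.symm m) : P) with hpd
  have hm1 : ((p : M × N)).1 = m := by simpa [he, hpr1] using hsm
  have hmemp : f ((p : M × N)).1 = x • ((p : M × N)).2 := (memP _).1 p.2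
  have hgm : g m = ((p : M × N)).2 := rfl
  rw [LinearMap.smul_apply, hgm, ← hmemp, hm1]
end

section
/- Let R be a commutative ring and let e ∈ R be an idempotent or a unit or zero. Then every R-module homomorphism f : M → N that is seemingly divisible by e (f vanishes on e-torsion and f(M) ⊆ eN) is divisible by e (f = e·g for some R-linear g). -/
/-- If `e` is an idempotent, a unit, or zero, then every `R`-module map
seemingly divisible by `e` is divisible by `e`. -/
theorem stmt2 {R : Type*} [CommRing R] (e : R)
    (he : IsIdempotentElem e ∨ IsUnit e ∨ e = 0)
    {M N : Type*} [AddCommGroup M] [Module R M] [AddCommGroup N] [Module R N]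
    (f : M →ₗ[R] N)
    (h1 : ∀ m : M, e • m = 0 → f m = 0)
    (h2 : ∀ m : M, ∃ n : N, f m = e • n) :
    ∃ g : M →ₗ[R] N, f = e • g := by
  rcases he with he | he | rfl
  · refine ⟨f, ?_⟩
    ext m
    have h : e • ((1 - e) • m) = 0 := by
      rw [smul_smul, mul_sub, mul_one, he, sub_self, zero_smul]
    have := h1 _ h
    rw [sub_smul, one_smul, map_sub, map_smul, sub_eq_zero] at this
    simpa using this
  · obtain ⟨u, rfl⟩ := he
    refine ⟨(↑u⁻¹ : R) • f, ?_⟩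
    ext m
    simp [smul_smul]
  · refine ⟨0, ?_⟩
    ext m
    simpa using h1 m (by simp)
end

section
/- Let R and S be commutative rings and (r,s) ∈ R × S. Then every (R×S)-module map seemingly divisible by (r,s) is divisible by (r,s) if and only if both: every R-module map seemingly divisible by r is divisible by r, and every S-module map seemingly divisible by s is divisible by s. -/
/-!
A module `M` over `R × S` splits as `(1, 0) • M ⊕ (0, 1) • M`, an `R`-module and an `S`-module,
and a map seemingly divisible by `(r, s)` restricts to maps seemingly divisible by `r` and by `s`
on the two pieces; dividing there and summing divides the original map. Conversely, `R`- and
`S`-modules are `R × S`-modules through the projections, and divisibility transfers back along a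
surjective ring map.

Both pieces are one construction: a non-unital section `σ : B →ₙ+* A` of
`π : A →+* B`, with `σ 1` idempotent and `σ (π c) = c * σ 1`, makes `σ 1 • M` a `B`-module.
-/

universe u

def SeeminglyDivisibleIsDivisible.{v} {A : Type*} [CommRing A] (a : A) : Prop :=
  ∀ (M N : Type v) [AddCommGroup M] [Module A M] [AddCommGroup N] [Module A N]
    (f : M →ₗ[A] N),
    (∀ m : M, a • m = 0 → f m = 0) → (∀ m : M, ∃ n : N, f m = a • n) →
    ∃ g : M →ₗ[A] N, f = a • g

theorem SeeminglyDivisibleIsDivisible.of_surjective {A B : Type*} [CommRing A] [CommRing B]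
    {a : A} (h : SeeminglyDivisibleIsDivisible.{u} a) (φ : A →+* B)
    (hφ : Function.Surjective φ) : SeeminglyDivisibleIsDivisible.{u} (φ a) := by
  intro M N _ _ _ _ f htors hdiv
  let _ := Module.compHom M φ
  let _ := Module.compHom N φ
  obtain ⟨g, hg⟩ := h M N { f with map_smul' := fun c m => f.map_smul (φ c) m } htors hdiv
  refine ⟨{ g with map_smul' := fun b m => ?_ }, LinearMap.ext fun m => LinearMap.congr_fun hg m⟩
  obtain ⟨c, rfl⟩ := hφ b
  exact g.map_smul c m

section Corner

variable {A B : Type*} [CommRing A] [CommRing B] (σ : B →ₙ+* A)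
variable (M : Type*) [AddCommGroup M] [Module A M]

def corner : Submodule A M :=
  LinearMap.eqLocus (σ 1 • LinearMap.id) LinearMap.id

variable {σ M} in
theorem mem_corner {m : M} : m ∈ corner σ M ↔ σ 1 • m = m := Iff.rfl

theorem smul_mem_corner (m : M) : σ 1 • m ∈ corner σ M := by
  rw [mem_corner, smul_smul, ← map_mul, one_mul]

def cornerAction : B →+* Module.End A (corner σ M) :=
  { ((Module.toModuleEnd A (corner σ M) : A →+* _) : A →ₙ+* _).comp σ with
    map_one' := LinearMap.ext fun p => Subtype.ext (mem_corner.1 p.2) }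

instance : Module B (corner σ M) := Module.compHom _ (cornerAction σ M)

variable {σ M}

@[simp]
theorem coe_smul_corner (b : B) (p : corner σ M) :
    ((b • p : corner σ M) : M) = σ b • (p : M) := rfl

theorem corner_map_smul_eq_smul {π : A →+* B} (hσ : ∀ c, σ (π c) = c * σ 1) (c : A)
    (p : corner σ M) : π c • p = c • p :=
  Subtype.ext <| by rw [coe_smul_corner, hσ, mul_smul, mem_corner.1 p.2, Submodule.coe_smul]

variable {N : Type*} [AddCommGroup N] [Module A N]

def LinearMap.cornerRestrict (f : M →ₗ[A] N) : corner σ M →ₗ[B] corner σ N where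
  toFun p := ⟨f p.1, by rw [mem_corner, ← map_smul, mem_corner.1 p.2]⟩
  map_add' p q := Subtype.ext (map_add f p.1 q.1)
  map_smul' b p := Subtype.ext (map_smul f (σ b) p.1)

def LinearMap.cornerRestrictScalars {π : A →+* B} (hσ : ∀ c, σ (π c) = c * σ 1)
    (g : corner σ M →ₗ[B] corner σ N) : corner σ M →ₗ[A] corner σ N where
  toFun := g
  map_add' := map_add g
  map_smul' c p := by
    rw [RingHom.id_apply, ← corner_map_smul_eq_smul hσ, map_smul, corner_map_smul_eq_smul hσ]

end Corner

theorem SeeminglyDivisibleIsDivisible.exists_corner_smul_eq_smul {A B : Type*} [CommRing A]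
    [CommRing B] {σ : B →ₙ+* A} {π : A →+* B} (hσ : ∀ c, σ (π c) = c * σ 1) {a : A}
    (h : SeeminglyDivisibleIsDivisible.{u} (π a)) {M N : Type u} [AddCommGroup M] [Module A M]
    [AddCommGroup N] [Module A N] (f : M →ₗ[A] N) (htors : ∀ m : M, a • m = 0 → f m = 0)
    (hdiv : ∀ m : M, ∃ n : N, f m = a • n) : ∃ g : M →ₗ[A] N, σ 1 • f = a • g := by
  have htors' (p : corner σ M) (hp : π a • p = 0) : f.cornerRestrict p = 0 :=
    Subtype.ext <| htors p <| by
      rw [← Submodule.coe_smul, ← corner_map_smul_eq_smul hσ, hp, Submodule.coe_zero]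
  have hdiv' (p : corner σ M) : ∃ n, f.cornerRestrict p = π a • n := by
    obtain ⟨n, hn⟩ := hdiv p
    refine ⟨⟨σ 1 • n, smul_mem_corner σ N n⟩, Subtype.ext ?_⟩
    rw [corner_map_smul_eq_smul hσ, Submodule.coe_smul, smul_comm]
    show f p = σ 1 • a • n
    rw [← hn, ← map_smul, mem_corner.1 p.2]
  obtain ⟨g, hg⟩ := h _ _ f.cornerRestrict htors' hdiv'
  refine ⟨(corner σ N).subtype ∘ₗ g.cornerRestrictScalars hσ ∘ₗ
    (σ 1 • LinearMap.id).codRestrict (corner σ M) (smul_mem_corner σ M),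
    LinearMap.ext fun m => ?_⟩
  have hm := congrArg Subtype.val (LinearMap.congr_fun hg ⟨σ 1 • m, smul_mem_corner σ M m⟩)
  rw [LinearMap.smul_apply, corner_map_smul_eq_smul hσ] at hm
  exact (map_smul f _ m).symm.trans hm

theorem NonUnitalAlgHom.inl_fst_eq_mul {R S : Type*} [CommRing R] [CommRing S] (c : R × S) :
    (inl ℤ R S : R →ₙ+* R × S) (RingHom.fst R S c) = c * (inl ℤ R S : R →ₙ+* R × S) 1 :=
  Prod.ext (mul_one c.1).symm (mul_zero c.2).symm

theorem NonUnitalAlgHom.inr_snd_eq_mul {R S : Type*} [CommRing R] [CommRing S] (c : R × S) :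
    (inr ℤ R S : S →ₙ+* R × S) (RingHom.snd R S c) = c * (inr ℤ R S : S →ₙ+* R × S) 1 :=
  Prod.ext (mul_zero c.1).symm (mul_one c.2).symm

theorem SeeminglyDivisibleIsDivisible.prod_iff {R S : Type*} [CommRing R] [CommRing S] (r : R)
    (s : S) : SeeminglyDivisibleIsDivisible.{u} (r, s) ↔
      SeeminglyDivisibleIsDivisible.{u} r ∧ SeeminglyDivisibleIsDivisible.{u} s := by
  refine ⟨fun h => ⟨h.of_surjective (RingHom.fst R S) Prod.fst_surjective,
    h.of_surjective (RingHom.snd R S) Prod.snd_surjective⟩, ?_⟩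
  rintro ⟨hR, hS⟩ M N _ _ _ _ f htors hdiv
  obtain ⟨g₁, hg₁⟩ :=
    exists_corner_smul_eq_smul NonUnitalAlgHom.inl_fst_eq_mul hR f htors hdiv
  obtain ⟨g₂, hg₂⟩ :=
    exists_corner_smul_eq_smul NonUnitalAlgHom.inr_snd_eq_mul hS f htors hdiv
  have hunit : (NonUnitalAlgHom.inl ℤ R S : R →ₙ+* R × S) 1 +
      (NonUnitalAlgHom.inr ℤ R S : S →ₙ+* R × S) 1 = 1 :=
    Prod.ext (add_zero 1) (zero_add 1)
  refine ⟨g₁ + g₂, ?_⟩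
  calc f = (_ + _) • f := by rw [hunit, one_smul]
    _ = (r, s) • (g₁ + g₂) := by rw [add_smul, hg₁, hg₂, smul_add]

/-- For `(r, s) ∈ R × S`, every `(R × S)`-module map seemingly divisible by `(r, s)`
is divisible by `(r, s)` iff the corresponding properties hold for `r` over `R` and
for `s` over `S`. -/
theorem stmt3 {R S : Type u} [CommRing R] [CommRing S] (r : R) (s : S) :
    (∀ (M N : Type u) [AddCommGroup M] [Module (R × S) M] [AddCommGroup N]
        [Module (R × S) N] (f : M →ₗ[R × S] N),
        (∀ m : M, (r, s) • m = 0 → f m = 0) → (∀ m : M, ∃ n : N, f m = (r, s) • n) →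
        ∃ g : M →ₗ[R × S] N, f = (r, s) • g) ↔
    ((∀ (M N : Type u) [AddCommGroup M] [Module R M] [AddCommGroup N] [Module R N]
        (f : M →ₗ[R] N),
        (∀ m : M, r • m = 0 → f m = 0) → (∀ m : M, ∃ n : N, f m = r • n) →
        ∃ g : M →ₗ[R] N, f = r • g) ∧
     (∀ (M N : Type u) [AddCommGroup M] [Module S M] [AddCommGroup N] [Module S N]
        (f : M →ₗ[S] N),
        (∀ m : M, s • m = 0 → f m = 0) → (∀ m : M, ∃ n : N, f m = s • n) →
        ∃ g : M →ₗ[S] N, f = s • g)) :=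
  SeeminglyDivisibleIsDivisible.prod_iff r s
end

section
/- Let R be a commutative ring satisfying: for every r ∈ R, every R-module map seemingly divisible by r is divisible by r. Then the same property holds for every quotient ring R/I. -/
universe u v

namespace LinearMap

variable {R : Type*} [CommRing R] {M N : Type*} [AddCommGroup M] [AddCommGroup N]
  [Module R M] [Module R N]

def SeeminglyDivisibleBy (r : R) (f : M →ₗ[R] N) : Prop :=
  (∀ m : M, r • m = 0 → f m = 0) ∧ ∀ m : M, ∃ n : N, f m = r • n

def DivisibleBy (r : R) (f : M →ₗ[R] N) : Prop :=
  ∃ g : M →ₗ[R] N, f = r • g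

variable {S : Type*} [CommRing S] [Algebra R S] [Module S M] [Module S N]
  [IsScalarTower R S M] [IsScalarTower R S N]

theorem SeeminglyDivisibleBy.restrictScalars {r : R} {f : M →ₗ[S] N}
    (hf : f.SeeminglyDivisibleBy (algebraMap R S r)) :
    (f.restrictScalars R).SeeminglyDivisibleBy r :=
  ⟨fun m hm ↦ hf.1 m (by rwa [algebraMap_smul]),
    fun m ↦ by simpa only [coe_restrictScalars, algebraMap_smul] using hf.2 m⟩

theorem DivisibleBy.of_restrictScalars (h : Function.Surjective (algebraMap R S)) {r : R}
    {f : M →ₗ[S] N} (hf : (f.restrictScalars R).DivisibleBy r) :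
    f.DivisibleBy (algebraMap R S r) := by
  obtain ⟨g, hg⟩ := hf
  refine ⟨g.extendScalarsOfSurjective h, LinearMap.ext fun m ↦ ?_⟩
  simpa only [algebraMap_smul, smul_apply, extendScalarsOfSurjective_apply, coe_restrictScalars]
    using LinearMap.congr_fun hg m

end LinearMap

open LinearMap

def SeeminglyDivisibleImpliesDivisible (R : Type u) [CommRing R] : Prop :=
  ∀ (r : R) (M N : Type v) [AddCommGroup M] [Module R M] [AddCommGroup N] [Module R N]
    (f : M →ₗ[R] N), f.SeeminglyDivisibleBy r → f.DivisibleBy r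

-- `S`-modules are `R`-modules through `algebraMap R S`; surjectivity lifts the divisor to `R`
-- and makes the `R`-linear quotient `S`-linear.
theorem SeeminglyDivisibleImpliesDivisible.of_surjective {R S : Type*} [CommRing R] [CommRing S]
    [Algebra R S] (h : Function.Surjective (algebraMap R S))
    (hR : SeeminglyDivisibleImpliesDivisible.{_, v} R) :
    SeeminglyDivisibleImpliesDivisible.{_, v} S := by
  intro s M N _ _ _ _ f hf
  obtain ⟨r, rfl⟩ := h s
  let := Module.compHom M (algebraMap R S)
  let := Module.compHom N (algebraMap R S)
  have : IsScalarTower R S M := IsScalarTower.of_compHom R S M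
  have : IsScalarTower R S N := IsScalarTower.of_compHom R S N
  exact .of_restrictScalars h (hR r M N _ hf.restrictScalars)

/-- If every `R`-module map seemingly divisible by an element is divisible by it,
then the same holds for every quotient ring `R ⧸ I`. -/
theorem stmt4 {R : Type u} [CommRing R]
    (hR : ∀ (r : R) (M N : Type u) [AddCommGroup M] [Module R M] [AddCommGroup N]
        [Module R N] (f : M →ₗ[R] N),
        (∀ m : M, r • m = 0 → f m = 0) → (∀ m : M, ∃ n : N, f m = r • n) →
        ∃ g : M →ₗ[R] N, f = r • g)
    (I : Ideal R) :
    ∀ (r : R ⧸ I) (M N : Type u) [AddCommGroup M] [Module (R ⧸ I) M] [AddCommGroup N]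
        [Module (R ⧸ I) N] (f : M →ₗ[R ⧸ I] N),
        (∀ m : M, r • m = 0 → f m = 0) → (∀ m : M, ∃ n : N, f m = r • n) →
        ∃ g : M →ₗ[R ⧸ I] N, f = r • g := by
  have hquot : SeeminglyDivisibleImpliesDivisible.{u, u} (R ⧸ I) :=
    .of_surjective Ideal.Quotient.mk_surjective fun r M N _ _ _ _ f hf ↦ hR r M N f hf.1 hf.2
  exact fun r M N _ _ _ _ f h₁ h₂ ↦ hquot r M N f ⟨h₁, h₂⟩
end

section
/- Let (R, m) be a commutative local ring and x ∈ m. Suppose there exists a sequence x₁, x₂, ... ∈ m such that for every n the product x₁⋯xₙ is not contained in the ideal (x) + Ann(x). Then there exists an R-module homomorphism f : M → N that is seemingly divisible by x but not divisible by x. -/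
universe u

open Finsupp

section Aux

variable {R : Type u} [CommRing R]

/-- The "weighted shift": `single n r ↦ single (n+1) (q n * r)`. -/
noncomputable def stmt6sm (q : ℕ → R) : (ℕ →₀ R) →ₗ[R] (ℕ →₀ R) :=
  Finsupp.lsum ℕ fun n => q n • Finsupp.lsingle (n + 1)

lemma stmt6sm_apply_zero (q : ℕ → R) (b : ℕ →₀ R) : stmt6sm q b 0 = 0 := by
  rw [stmt6sm, Finsupp.lsum_apply, Finsupp.sum_apply]
  refine Finset.sum_eq_zero fun n _ => ?_
  simp [Finsupp.single_apply]

lemma stmt6sm_apply_succ (q : ℕ → R) (b : ℕ →₀ R) (j : ℕ) :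
    stmt6sm q b (j + 1) = q j * b j := by
  classical
  rw [stmt6sm, Finsupp.lsum_apply, Finsupp.sum_apply]
  have h1 : ∀ n ∈ b.support, ((((q n • Finsupp.lsingle (n+1)) : R →ₗ[R] ℕ →₀ R) (b n)) : ℕ →₀ R) (j+1)
      = if n = j then q n * b n else 0 := by
    intro n _
    by_cases hnj : n = j <;> simp [Finsupp.single_apply, hnj]
  rw [Finsupp.sum, Finset.sum_congr rfl h1, Finset.sum_ite_eq' b.support j
    (fun n => q n * b n)]
  by_cases h : j ∈ b.support
  · simp [h]
  · simp [h, Finsupp.notMem_support_iff.mp h]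

/-- `T = id - sm`. -/
noncomputable def stmt6T (q : ℕ → R) : (ℕ →₀ R) →ₗ[R] (ℕ →₀ R) :=
  LinearMap.id - stmt6sm q

lemma stmt6T_apply_zero (q : ℕ → R) (b : ℕ →₀ R) : stmt6T q b 0 = b 0 := by
  simp [stmt6T, LinearMap.sub_apply, stmt6sm_apply_zero]

lemma stmt6T_apply_succ (q : ℕ → R) (b : ℕ →₀ R) (j : ℕ) :
    stmt6T q b (j + 1) = b (j + 1) - q j * b j := by
  simp [stmt6T, LinearMap.sub_apply, stmt6sm_apply_succ]

lemma stmt6sm_single_one (q : ℕ → R) (n : ℕ) :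
    stmt6sm q (Finsupp.single n 1) = q n • Finsupp.single (n + 1) 1 := by
  rw [stmt6sm, Finsupp.lsum_single]
  simp

/-- Key divisibility lemma: if `x • a = T b` then `b` is divisible by `x`. -/
lemma stmt6key (q : ℕ → R) (x : R) (a b : ℕ →₀ R) (h : x • a = stmt6T q b) :
    ∃ b' : ℕ →₀ R, x • b' = b := by
  classical
  let d : ℕ → R := fun j => Nat.rec (a 0) (fun j dj => a (j + 1) + q j * dj) j
  have hd0 : d 0 = a 0 := rfl
  have hdS : ∀ j, d (j + 1) = a (j + 1) + q j * d j := fun j => rfl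
  have hb : ∀ j, b j = x * d j := by
    intro j
    induction j with
    | zero =>
      have h0 := congrArg (fun v : ℕ →₀ R => v 0) h
      simp only [Finsupp.smul_apply, smul_eq_mul, stmt6T_apply_zero] at h0
      rw [hd0, ← h0]
    | succ j ih =>
      have hS := congrArg (fun v : ℕ →₀ R => v (j + 1)) h
      simp only [Finsupp.smul_apply, smul_eq_mul, stmt6T_apply_succ] at hS
      have : b (j + 1) = x * a (j + 1) + q j * b j := by linear_combination -hS
      rw [this, ih, hdS]; ring
  set B := b.support.sup id with hB
  have hbz : ∀ j, B < j → b j = 0 := by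
    intro j hj
    by_contra hne
    have h1 : j ∈ b.support := Finsupp.mem_support_iff.mpr hne
    have h2 : j ≤ B := Finset.le_sup (f := id) h1
    omega
  refine ⟨Finsupp.onFinset (Finset.range (B + 1))
    (fun j => if j ≤ B then d j else 0) ?_, ?_⟩
  · intro j hj
    simp only [ne_eq, ite_eq_right_iff, not_forall] at hj
    exact Finset.mem_range.mpr (Nat.lt_succ_of_le hj.1)
  · ext j
    simp only [Finsupp.smul_apply, Finsupp.onFinset_apply, smul_eq_mul]
    by_cases hj : j ≤ B
    · simp [hj, (hb j).symm]
    · simp [hj, hbz j (by omega)]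

end Aux

/-- If `(R, m)` is local, `x ∈ m`, and there is a sequence `x₁, x₂, … ∈ m` with
`x₁⋯xₙ ∉ (x) + Ann(x)` for all `n`, then there exists an `R`-module map that is
seemingly divisible by `x` but not divisible by `x`. -/
theorem stmt6 {R : Type u} [CommRing R] [IsLocalRing R]
    (x : R) (hx : x ∈ IsLocalRing.maximalIdeal R)
    (xs : ℕ → R) (hxs : ∀ i, xs i ∈ IsLocalRing.maximalIdeal R)
    (hprod : ∀ n : ℕ, (∏ i ∈ Finset.range (n + 1), xs i) ∉
      Ideal.span {x} + (Ideal.span {x}).annihilator) :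
    ∃ (M : Type u) (_ : AddCommGroup M) (_ : Module R M)
      (N : Type u) (_ : AddCommGroup N) (_ : Module R N) (f : M →ₗ[R] N),
      (∀ m : M, x • m = 0 → f m = 0) ∧ (∀ m : M, ∃ n : N, f m = x • n) ∧
      ¬ ∃ g : M →ₗ[R] N, f = x • g := by
  classical
  set q : ℕ → R := xs with hq
  set K : Submodule R (ℕ →₀ R) := LinearMap.range (stmt6T q) with hK
  set U : Submodule R (ℕ →₀ R) := LinearMap.range (x • stmt6T q) with hU
  -- the map f : (F⧸K) → (F⧸U) induced by multiplication by x
  have hker : K ≤ LinearMap.ker (U.mkQ.comp (x • (LinearMap.id : (ℕ →₀ R) →ₗ[R] (ℕ →₀ R)))) := by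
    rintro v ⟨b, rfl⟩
    simp only [LinearMap.mem_ker, LinearMap.comp_apply, LinearMap.smul_apply, LinearMap.id_apply,
      Submodule.mkQ_apply, Submodule.Quotient.mk_eq_zero]
    exact ⟨b, rfl⟩
  refine ⟨(ℕ →₀ R) ⧸ K, inferInstance, inferInstance, (ℕ →₀ R) ⧸ U, inferInstance, inferInstance,
    K.liftQ (U.mkQ.comp (x • (LinearMap.id : (ℕ →₀ R) →ₗ[R] (ℕ →₀ R)))) hker, ?_, ?_, ?_⟩
  · -- vanishes on x-torsion
    intro m hm
    obtain ⟨a, rfl⟩ := Submodule.Quotient.mk_surjective K m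
    have hxa : x • a ∈ K := by
      rw [← Submodule.Quotient.mk_eq_zero K]
      rw [Submodule.Quotient.mk_smul]
      exact hm
    obtain ⟨b, hb⟩ := hxa
    obtain ⟨b', hb'⟩ := stmt6key q x a b hb.symm
    have : x • a ∈ U := ⟨b', by
      simp only [LinearMap.smul_apply]
      rw [← map_smul, hb', hb]⟩
    show K.liftQ _ hker (Submodule.Quotient.mk a) = 0
    rw [Submodule.liftQ_apply]
    simpa only [LinearMap.comp_apply, LinearMap.smul_apply, LinearMap.id_apply,
      Submodule.mkQ_apply, Submodule.Quotient.mk_eq_zero] using this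
  · -- lands in x • N
    intro m
    obtain ⟨a, rfl⟩ := Submodule.Quotient.mk_surjective K m
    refine ⟨U.mkQ a, ?_⟩
    show K.liftQ _ hker (Submodule.Quotient.mk a) = _
    rw [Submodule.liftQ_apply]
    simp [← map_smul]
  · -- not divisible
    rintro ⟨g, hg⟩
    set w : ℕ → ((ℕ →₀ R) ⧸ U) := fun n => g (Submodule.Quotient.mk (Finsupp.single n 1)) with hw
    have hwrel : ∀ n, w n = q n • w (n + 1) := by
      intro n
      have hmem : (Finsupp.single n 1 : ℕ →₀ R) - q n • Finsupp.single (n + 1) 1 ∈ K :=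
        ⟨Finsupp.single n 1, by
          simp [stmt6T, LinearMap.sub_apply, stmt6sm_single_one]⟩
      have : (Submodule.Quotient.mk (Finsupp.single n 1) : (ℕ →₀ R) ⧸ K)
          = Submodule.Quotient.mk (q n • Finsupp.single (n + 1) 1) :=
        (Submodule.Quotient.eq K).mpr hmem
      have h2 : g (Submodule.Quotient.mk (Finsupp.single n 1))
          = q n • g (Submodule.Quotient.mk (Finsupp.single (n + 1) 1)) := by
        rw [this, Submodule.Quotient.mk_smul, map_smul]
      exact h2
    have hw0 : ∀ k, w 0 = (∏ i ∈ Finset.range k, q i) • w k := by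
      intro k
      induction k with
      | zero => simp
      | succ k ih =>
        rw [ih, hwrel k, smul_smul, Finset.prod_range_succ]
    -- x • w 0 = class of (single 0 x)
    have hfw : x • w 0 = U.mkQ (Finsupp.single 0 x) := by
      have := congrArg (fun h : ((ℕ →₀ R) ⧸ K) →ₗ[R] ((ℕ →₀ R) ⧸ U) =>
        h (Submodule.Quotient.mk (Finsupp.single 0 1))) hg
      simp only [LinearMap.smul_apply] at this
      rw [Submodule.liftQ_apply] at this
      simp only [LinearMap.comp_apply, LinearMap.smul_apply, LinearMap.id_apply,
        Submodule.mkQ_apply] at this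
      rw [hw, ← this, Finsupp.smul_single, smul_eq_mul, mul_one, Submodule.mkQ_apply]
    obtain ⟨a, ha⟩ := Submodule.Quotient.mk_surjective U (w 0)
    have htor : x • a - Finsupp.single 0 x ∈ U := by
      rw [← Submodule.Quotient.eq U, Submodule.Quotient.mk_smul]
      rw [ha]
      rw [hfw, Submodule.mkQ_apply]
    obtain ⟨b, hb⟩ := htor
    set m : ℕ := b.support.sup id with hm
    have hbz : ∀ n ∈ b.support, n ≤ m := fun n hn => Finset.le_sup (f := id) hn
    -- the functional φ
    set E : ℕ → R := fun j => if j ≤ m + 1 then ∏ i ∈ Finset.Ico j (m + 1), q i else 0 with hE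
    set φ : (ℕ →₀ R) →ₗ[R] R := Finsupp.linearCombination R E with hφ
    have hφsingle : ∀ (j : ℕ) (r : R), φ (Finsupp.single j r) = r * E j := by
      intro j r
      rw [hφ, Finsupp.linearCombination_single, smul_eq_mul]
    have hEstep : ∀ n, n ≤ m → E n = q n * E (n + 1) := by
      intro n hn
      rw [hE]
      simp only [if_pos (by omega : n ≤ m + 1), if_pos (by omega : n + 1 ≤ m + 1)]
      exact Finset.prod_eq_prod_Ico_succ_bot (by omega) q
    have hφT : ∀ b'' : ℕ →₀ R, (∀ n ∈ b''.support, n ≤ m) → φ (stmt6T q b'') = 0 := by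
      intro b'' hsupp
      have h1 : stmt6T q b'' = b'' - stmt6sm q b'' := rfl
      rw [h1, map_sub]
      have h2 : φ (stmt6sm q b'') = b''.sum fun n r => (q n * r) * E (n + 1) := by
        rw [stmt6sm, Finsupp.lsum_apply, map_finsuppSum]
        refine Finsupp.sum_congr fun n _ => ?_
        simp only [LinearMap.smul_apply, Finsupp.lsingle_apply, Finsupp.smul_single,
          smul_eq_mul]
        exact hφsingle (n + 1) (q n * b'' n)
      have h3 : φ b'' = b''.sum fun n r => r * E n := by
        rw [hφ, Finsupp.linearCombination_apply]
        exact Finsupp.sum_congr fun n _ => by rw [smul_eq_mul]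
      rw [h2, h3, sub_eq_zero]
      refine Finsupp.sum_congr fun n hn => ?_
      rw [hEstep n (hsupp n hn)]; ring
    -- (ii) : x * φ a = x * P where P = ∏_{i < m+1} q i
    set P : R := ∏ i ∈ Finset.range (m + 1), q i with hP
    have hE0 : E 0 = P := by
      rw [hE, hP]
      simp only [if_pos (by omega : 0 ≤ m + 1)]
      rw [Finset.range_eq_Ico]
    have hii : x * φ a = x * P := by
      have := congrArg φ hb
      simp only [LinearMap.smul_apply] at this
      rw [map_sub, map_smul, smul_eq_mul, map_smul, smul_eq_mul] at this
      rw [hφT b (fun n hn => hbz n hn), hφsingle 0 x, hE0] at this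
      linear_combination -this
    -- (i) : φ a = P' * φ c + x * s
    obtain ⟨c, hc⟩ := Submodule.Quotient.mk_surjective U (w (m + 2))
    have hrel : a - (∏ i ∈ Finset.range (m + 2), q i) • c ∈ U := by
      rw [← Submodule.Quotient.eq U, ha, hw0 (m + 2), ← hc, ← Submodule.Quotient.mk_smul]
    obtain ⟨b₂, hb₂⟩ := hrel
    have hi : φ a - (∏ i ∈ Finset.range (m + 2), q i) * φ c = x * φ (stmt6T q b₂) := by
      have := congrArg φ hb₂
      simp only [LinearMap.smul_apply] at this
      rw [map_smul, smul_eq_mul, map_sub, map_smul, smul_eq_mul] at this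
      linear_combination -this
    set s : R := φ (stmt6T q b₂) with hs
    set t : R := q (m + 1) * φ c with ht
    have hP' : (∏ i ∈ Finset.range (m + 2), q i) = P * q (m + 1) := by
      rw [hP, Finset.prod_range_succ]
    have hzero : (P * (1 - t) - x * s) * x = 0 := by
      rw [ht]
      linear_combination x * hi - hii + x * φ c * hP'
    -- membership in the ideal sum
    have hann : P * (1 - t) - x * s ∈ (Ideal.span {x}).annihilator := by
      rw [Submodule.mem_annihilator]
      intro n hn
      obtain ⟨d, rfl⟩ := Ideal.mem_span_singleton'.mp hn
      rw [smul_eq_mul]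
      calc (P * (1 - t) - x * s) * (d * x) = d * ((P * (1 - t) - x * s) * x) := by ring
        _ = 0 := by rw [hzero, mul_zero]
    have hspan : x * s ∈ Ideal.span {x} := Ideal.mem_span_singleton'.mpr ⟨s, mul_comm s x⟩
    have hsum : P * (1 - t) ∈ Ideal.span {x} + (Ideal.span {x}).annihilator := by
      have h1 := Submodule.add_mem_sup hspan hann
      rw [← Submodule.add_eq_sup] at h1
      have h2 : x * s + (P * (1 - t) - x * s) = P * (1 - t) := by ring
      rwa [h2] at h1
    -- (1 - t) is a unit
    have htm : t ∈ IsLocalRing.maximalIdeal R :=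
      Ideal.mul_mem_right _ _ (hxs (m + 1))
    have hunit : IsUnit (1 - t) :=
      IsLocalRing.isUnit_one_sub_self_of_mem_nonunits t htm
    obtain ⟨u, hu⟩ := hunit
    have hPmem : P ∈ Ideal.span {x} + (Ideal.span {x}).annihilator := by
      have h1 := Ideal.mul_mem_right (↑u⁻¹ : R) _ hsum
      have h2 : P * (1 - t) * (↑u⁻¹ : R) = P := by
        rw [← hu, mul_assoc]
        rw [Units.mul_inv, mul_one]
      rwa [h2] at h1
    exact hprod m hPmem
end

section
/- Let (R, m) be a commutative local ring such that for every r ∈ R, every R-module map seemingly divisible by r is divisible by r. Then m ≠ m² unless m = 0. -/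
/-!
Divisibility in `R` is total: for the map `R ⧸ (a) → R ⧸ ((a) ⊓ (b))` given by multiplication
by `b`, the image `d` of `1` under a divisor by `b` gives `a ∣ b * (1 - d)` and `b ∣ a * d`, and
`d` or `1 - d` is a unit. Hence if `m = m²`, every element of `m` is a product of two elements of
`m`, so each `r ∈ m` factors as `r = a₀ y₁`, `y₁ = a₁ y₂`, … with all `aₙ, yₙ ∈ m`.
Let `T = (ℕ →₀ R) ⧸ V` be the module generated by `e₀, e₁, …` subject to `eₙ = aₙ eₙ₊₁`.
Multiplication by `r` from `T` to `(ℕ →₀ R) ⧸ r V` is seemingly divisible by `r`, since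
`V ∩ r (ℕ →₀ R) = r V` (the relations are triangular). Reading a divisor against the functional `Σ cₙ eₙ ↦ Σ cₙ aₙ ⋯ aₖ₋₁`, which kills
`eₙ - aₙ eₙ₊₁` for `n < k`, gives `r² ∈ r² m`, so `r² = 0`. Finally every `x ∈ m` is
`x = a y` with `a ∣ y` or `y ∣ a`, i.e. a multiple of the square of an element of `m`.
-/

universe u

open IsLocalRing

def LinearMap.SeeminglyDivisibleBy_s7 {R M N : Type*} [CommRing R] [AddCommGroup M] [Module R M]
    [AddCommGroup N] [Module R N] (f : M →ₗ[R] N) (r : R) : Prop :=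
  (∀ m : M, r • m = 0 → f m = 0) ∧ ∀ m : M, ∃ n : N, f m = r • n

def DividesSeeminglyDivisible {R : Type u} [CommRing R] (r : R) : Prop :=
  ∀ (M N : Type u) [AddCommGroup M] [Module R M] [AddCommGroup N] [Module R N]
    (f : M →ₗ[R] N), f.SeeminglyDivisibleBy_s7 r → ∃ g : M →ₗ[R] N, f = r • g

section

variable {R : Type u} [CommRing R]

theorem dvd_or_dvd_of_dividesSeeminglyDivisible [IsLocalRing R] (a : R) {b : R}
    (hb : DividesSeeminglyDivisible b) : a ∣ b ∨ b ∣ a := by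
  set J : Ideal R := Ideal.span {a} ⊓ Ideal.span {b}
  have hbJ : ∀ x, b * x ∈ Ideal.span {a} → b * x ∈ J := fun x hx =>
    ⟨hx, Ideal.mem_span_singleton'.2 ⟨x, mul_comm x b⟩⟩
  let f : (R ⧸ Ideal.span {a}) →ₗ[R] R ⧸ J := Submodule.mapQ _ _ (b • LinearMap.id)
    fun x hx => Submodule.mem_comap.2 (hbJ x (Ideal.mul_mem_left _ b hx))
  have hf (x : R) : f (Ideal.Quotient.mk _ x) = Ideal.Quotient.mk J (b * x) := rfl
  have hfb : f.SeeminglyDivisibleBy_s7 b := by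
    constructor
    · rintro ⟨x⟩ hx
      exact Ideal.Quotient.eq_zero_iff_mem.2 (hbJ x (Ideal.Quotient.eq_zero_iff_mem.1 hx))
    · rintro ⟨x⟩
      exact ⟨Ideal.Quotient.mk J x, rfl⟩
  obtain ⟨g, hg⟩ := hb _ _ f hfb
  obtain ⟨d, hd⟩ := Ideal.Quotient.mk_surjective (g (Ideal.Quotient.mk _ 1))
  have hbd : b * (1 - d) ∈ J := by
    have h := LinearMap.congr_fun hg (Ideal.Quotient.mk _ 1)
    rw [hf, LinearMap.smul_apply, ← hd, Algebra.smul_def, Ideal.Quotient.algebraMap_eq,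
      ← map_mul, Ideal.Quotient.eq] at h
    rwa [mul_one, ← mul_one_sub] at h
  have had : a * d ∈ J := by
    have h : a • g (Ideal.Quotient.mk _ 1) = 0 := by
      rw [← map_smul, Algebra.smul_def, Ideal.Quotient.algebraMap_eq, ← map_mul, mul_one,
        Ideal.Quotient.eq_zero_iff_mem.2 (Ideal.mem_span_singleton_self a), map_zero]
    rwa [← hd, Algebra.smul_def, Ideal.Quotient.algebraMap_eq, ← map_mul,
      Ideal.Quotient.eq_zero_iff_mem] at h
  rcases isUnit_or_isUnit_of_add_one (add_sub_cancel d 1) with hu | hu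
  · exact .inr (hu.dvd_mul_right.1 (Ideal.mem_span_singleton.1 had.2))
  · exact .inl (hu.dvd_mul_right.1 (Ideal.mem_span_singleton.1 hbd.1))

theorem Ideal.exists_mem_mem_eq_mul_of_le_sq (htot : ∀ a b : R, a ∣ b ∨ b ∣ a) {I : Ideal R}
    (hI : I ≤ I ^ 2) {x : R} (hx : x ∈ I) : ∃ a ∈ I, ∃ y ∈ I, x = a * y := by
  have hx2 : x ∈ I * I := sq I ▸ hI hx
  refine Submodule.mul_induction_on (C := fun x => ∃ a ∈ I, ∃ y ∈ I, x = a * y) hx2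
    (fun a ha y hy => ⟨a, ha, y, hy, rfl⟩) ?_
  rintro _ _ ⟨a, ha, b, hb, rfl⟩ ⟨c, hc, d, hd, rfl⟩
  rcases htot (a * b) (c * d) with ⟨t, ht⟩ | ⟨t, ht⟩
  · exact ⟨a, ha, (1 + t) * b, I.mul_mem_left _ hb, by rw [ht]; ring⟩
  · exact ⟨c, hc, (1 + t) * d, I.mul_mem_left _ hd, by rw [ht]; ring⟩

theorem exists_seq_eq_mul_of_forall_exists_mul {M : Type*} [Mul M] {S : Set M}
    (hS : ∀ x ∈ S, ∃ a ∈ S, ∃ y ∈ S, x = a * y) {r : M} (hr : r ∈ S) :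
    ∃ a y : ℕ → M, y 0 = r ∧ ∀ n, a n ∈ S ∧ y n ∈ S ∧ y n = a n * y (n + 1) := by
  choose! A hA Y hY hAY using hS
  refine ⟨fun n => A (Y^[n] r), fun n => Y^[n] r, rfl, fun n => ?_⟩
  have hn : Y^[n] r ∈ S := by
    induction n with
    | zero => exact hr
    | succ n ih => rw [Function.iterate_succ_apply']; exact hY _ ih
  exact ⟨hA _ hn, hn, by
    simpa only [Function.iterate_succ_apply'] using hAY _ hn⟩

theorem eq_prod_range_mul_of_forall_eq_mul_succ {M : Type*} [CommMonoid M] {a y : ℕ → M}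
    (h : ∀ n, y n = a n * y (n + 1)) (n : ℕ) : y 0 = (∏ i ∈ Finset.range n, a i) * y n := by
  induction n with
  | zero => simp
  | succ n ih => rw [ih, h n, Finset.prod_range_succ, mul_assoc]

end

open scoped Pointwise

namespace Telescope

variable {R : Type u} [CommRing R] (a : ℕ → R)

noncomputable def rel (n : ℕ) : ℕ →₀ R := Finsupp.single n 1 - Finsupp.single (n + 1) (a n)

noncomputable def relations : Submodule R (ℕ →₀ R) := Submodule.span R (Set.range (rel a))

noncomputable def weight (k : ℕ) : (ℕ →₀ R) →ₗ[R] R :=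
  Finsupp.linearCombination R fun n => ∏ i ∈ Finset.Ico n k, a i

theorem linearCombination_rel_apply_zero (c : ℕ →₀ R) :
    Finsupp.linearCombination R (rel a) c 0 = c 0 := by
  simp [Finsupp.linearCombination_apply, Finsupp.sum, rel, Finsupp.single_apply]

theorem linearCombination_rel_apply_succ (c : ℕ →₀ R) (n : ℕ) :
    Finsupp.linearCombination R (rel a) c (n + 1) = c (n + 1) - a n * c n := by
  simp [Finsupp.linearCombination_apply, Finsupp.sum, rel, Finsupp.single_apply, mul_sub,
    Finset.sum_sub_distrib, mul_ite]
  split_ifs with h <;> simp_all [mul_comm]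

theorem coeff_mem_of_linearCombination_rel_mem {I : Ideal R} {c : ℕ →₀ R}
    (hc : ∀ n, Finsupp.linearCombination R (rel a) c n ∈ I) (n : ℕ) : c n ∈ I := by
  induction n with
  | zero => simpa only [linearCombination_rel_apply_zero] using hc 0
  | succ n ih =>
    have h := hc (n + 1)
    rw [linearCombination_rel_apply_succ] at h
    simpa using I.add_mem h (I.mul_mem_left (a n) ih)

theorem smul_mem_smul_relations {r : R} {v : ℕ →₀ R} (hv : r • v ∈ relations a) :
    r • v ∈ r • relations a := by
  obtain ⟨c, hc⟩ : r • v ∈ LinearMap.range (Finsupp.linearCombination R (rel a)) := by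
    rwa [Finsupp.range_linearCombination]
  have hcr : ∀ n, c n ∈ Ideal.span {r} := coeff_mem_of_linearCombination_rel_mem a fun n => by
    rw [hc, Finsupp.smul_apply]
    exact Ideal.mem_span_singleton'.2 ⟨v n, mul_comm _ _⟩
  rw [← hc, ← Submodule.ideal_span_singleton_smul, Finsupp.linearCombination_apply]
  exact Submodule.sum_mem _ fun n _ =>
    Submodule.smul_mem_smul (hcr n) (Submodule.subset_span ⟨n, rfl⟩)

theorem mk_single_zero_eq_prod_smul (n : ℕ) :
    (Submodule.Quotient.mk (Finsupp.single 0 1) : (ℕ →₀ R) ⧸ relations a) =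
      (∏ i ∈ Finset.range n, a i) • Submodule.Quotient.mk (Finsupp.single n 1) := by
  induction n with
  | zero => simp
  | succ n ih =>
    have hrel : (Submodule.Quotient.mk (Finsupp.single n 1) : (ℕ →₀ R) ⧸ relations a) =
        a n • Submodule.Quotient.mk (Finsupp.single (n + 1) 1) := by
      rw [← Submodule.Quotient.mk_smul, Submodule.Quotient.eq, Finsupp.smul_single_one]
      exact Submodule.subset_span ⟨n, rfl⟩
    rw [ih, hrel, smul_smul, Finset.prod_range_succ]

theorem weight_single_zero (k : ℕ) :
    weight a k (Finsupp.single 0 1) = ∏ i ∈ Finset.range k, a i := by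
  rw [weight, Finsupp.linearCombination_single, one_smul, Finset.range_eq_Ico]

theorem weight_rel_of_lt {n k : ℕ} (h : n < k) : weight a k (rel a n) = 0 := by
  simp [weight, rel, Finset.prod_eq_prod_Ico_succ_bot h]

theorem exists_weight_eq_zero {u : ℕ →₀ R} (hu : u ∈ relations a) :
    ∃ k, weight a k u = 0 := by
  obtain ⟨c, rfl⟩ : u ∈ LinearMap.range (Finsupp.linearCombination R (rel a)) := by
    rwa [Finsupp.range_linearCombination]
  obtain ⟨k, hk⟩ := Finset.exists_nat_subset_range c.support
  refine ⟨k, ?_⟩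
  rw [Finsupp.apply_linearCombination, Finsupp.linearCombination_apply]
  exact Finset.sum_eq_zero fun n hn => by
    simp [weight_rel_of_lt a (Finset.mem_range.1 (hk hn))]

theorem smul_relations_le_comap (r : R) :
    relations a ≤ (r • relations a).comap (r • LinearMap.id) := fun _ hv =>
  Submodule.smul_mem_pointwise_smul _ r _ hv

noncomputable def mulMap (r : R) :
    ((ℕ →₀ R) ⧸ relations a) →ₗ[R] (ℕ →₀ R) ⧸ r • relations a :=
  Submodule.mapQ _ _ (r • LinearMap.id) (smul_relations_le_comap a r)

theorem mulMap_mk (r : R) (v : ℕ →₀ R) :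
    mulMap a r (Submodule.Quotient.mk v) = Submodule.Quotient.mk (r • v) := rfl

theorem mulMap_seeminglyDivisibleBy (r : R) : (mulMap a r).SeeminglyDivisibleBy_s7 r := by
  constructor
  · rintro ⟨v⟩ hv
    rw [Submodule.Quotient.quot_mk_eq_mk, ← Submodule.Quotient.mk_smul,
      Submodule.Quotient.mk_eq_zero] at hv
    exact (Submodule.Quotient.mk_eq_zero _).2 (smul_mem_smul_relations a hv)
  · rintro ⟨v⟩
    exact ⟨Submodule.Quotient.mk v, rfl⟩

end Telescope

open Telescope in
theorem mul_self_eq_zero_of_forall_eq_mul_succ {R : Type u} [CommRing R] [IsLocalRing R]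
    {r : R} (hr : DividesSeeminglyDivisible r) (a y : ℕ → R) (hy0 : y 0 = r)
    (h : ∀ n, a n ∈ maximalIdeal R ∧ y n ∈ maximalIdeal R ∧ y n = a n * y (n + 1)) :
    r * r = 0 := by
  obtain ⟨g, hg⟩ := hr _ _ _ (mulMap_seeminglyDivisibleBy a r)
  set e : ℕ → (ℕ →₀ R) ⧸ relations a := fun n =>
    Submodule.Quotient.mk (Finsupp.single n 1)
  obtain ⟨v, hv⟩ := Submodule.Quotient.mk_surjective _ (g (e 0))
  obtain ⟨u, hu, hru⟩ :
      ∃ u ∈ relations a, r • u = r • Finsupp.single 0 1 - r • v := by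
    rw [← Submodule.mem_smul_pointwise_iff_exists, ← Submodule.Quotient.eq, ← mulMap_mk,
      Submodule.Quotient.mk_smul, hv, hg]
    rfl
  obtain ⟨k, hk⟩ := exists_weight_eq_zero a hu
  obtain ⟨w, hw⟩ := Submodule.Quotient.mk_surjective _ (g (e (k + 1)))
  set P := ∏ i ∈ Finset.range k, a i
  obtain ⟨u', -, hru'⟩ : ∃ u' ∈ relations a, r • u' = v - (P * a k) • w := by
    rw [← Submodule.mem_smul_pointwise_iff_exists, ← Submodule.Quotient.eq,
      Submodule.Quotient.mk_smul, hv, hw, ← Finset.prod_range_succ, ← map_smul,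
      ← mk_single_zero_eq_prod_smul]
  have h1 := congrArg (weight a k) hru
  have h2 := congrArg (weight a k) hru'
  simp only [map_smul, map_sub, hk, weight_single_zero, smul_eq_mul] at h1 h2
  have hry : r = P * y k :=
    hy0 ▸ eq_prod_range_mul_of_forall_eq_mul_succ (fun n => (h n).2.2) k
  -- `r² = r P yₖ = r yₖ (weight v)`, and `weight v ≡ P aₖ (weight w)` modulo `r`.
  have key : r * r * (1 - (a k * weight a k w + y k * weight a k u')) = 0 := by
    linear_combination (r - a k * weight a k w * r) * hry - y k * h1 - r * y k * h2
  have hunit : IsUnit (1 - (a k * weight a k w + y k * weight a k u')) :=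
    isUnit_one_sub_self_of_mem_nonunits _ <| (maximalIdeal R).add_mem
      ((maximalIdeal R).mul_mem_right _ (h k).1) ((maximalIdeal R).mul_mem_right _ (h k).2.1)
  exact hunit.mul_left_eq_zero.1 key

theorem IsLocalRing.maximalIdeal_eq_bot_of_eq_sq {R : Type u} [CommRing R] [IsLocalRing R]
    (hR : ∀ r : R, DividesSeeminglyDivisible r) (h2 : maximalIdeal R = maximalIdeal R ^ 2) :
    maximalIdeal R = ⊥ := by
  have htot (a b : R) : a ∣ b ∨ b ∣ a := dvd_or_dvd_of_dividesSeeminglyDivisible a (hR b)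
  have hfac :
      ∀ x ∈ maximalIdeal R, ∃ a ∈ maximalIdeal R, ∃ y ∈ maximalIdeal R, x = a * y :=
    fun _ hx => Ideal.exists_mem_mem_eq_mul_of_le_sq htot h2.le hx
  have hsq : ∀ r ∈ maximalIdeal R, r * r = 0 := fun r hr => by
    obtain ⟨a, y, hy0, h⟩ := exists_seq_eq_mul_of_forall_exists_mul hfac hr
    exact mul_self_eq_zero_of_forall_eq_mul_succ (hR r) a y hy0 h
  refine eq_bot_iff.2 fun x hx => ?_
  obtain ⟨a, ha, y, hy, rfl⟩ := hfac x hx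
  rcases htot a y with ⟨t, rfl⟩ | ⟨t, rfl⟩
  · rw [Submodule.mem_bot, ← mul_assoc, hsq a ha, zero_mul]
  · rw [Submodule.mem_bot, mul_right_comm, hsq y hy, zero_mul]

/-- If `(R, m)` is local and every `R`-module map seemingly divisible by an
element is divisible by it, then `m ≠ m²` unless `m = 0`. -/
theorem stmt7 {R : Type u} [CommRing R] [IsLocalRing R]
    (hR : ∀ (r : R) (M N : Type u) [AddCommGroup M] [Module R M] [AddCommGroup N]
        [Module R N] (f : M →ₗ[R] N),
        (∀ m : M, r • m = 0 → f m = 0) → (∀ m : M, ∃ n : N, f m = r • n) →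
        ∃ g : M →ₗ[R] N, f = r • g)
    (hm : IsLocalRing.maximalIdeal R ≠ ⊥) :
    IsLocalRing.maximalIdeal R ≠ (IsLocalRing.maximalIdeal R) ^ 2 := by
  intro h2
  exact hm (maximalIdeal_eq_bot_of_eq_sq (fun r M N _ _ _ _ f hf => hR r M N f hf.1 hf.2) h2)
end

section
/- Let (R, m) be a commutative local ring with m = m² and m ≠ 0. Then there exists a nonzero x ∈ m such that m ≠ (x) + Ann(x). -/
/-- If `(R, m)` is local with `m = m²` and `m ≠ 0`, then there is a nonzero
`x ∈ m` with `m ≠ (x) + Ann(x)`. -/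
theorem stmt9 {R : Type*} [CommRing R] [IsLocalRing R]
    (h2 : IsLocalRing.maximalIdeal R = (IsLocalRing.maximalIdeal R) ^ 2)
    (hne : IsLocalRing.maximalIdeal R ≠ ⊥) :
    ∃ x ∈ IsLocalRing.maximalIdeal R, x ≠ 0 ∧
      IsLocalRing.maximalIdeal R ≠ Ideal.span {x} + (Ideal.span {x}).annihilator := by
  by_contra hcon
  push_neg at hcon
  set m := IsLocalRing.maximalIdeal R with hm
  have key : ∀ x ∈ m, ∀ y ∈ m, y * x = 0 := by
    intro x hx y hy
    rcases eq_or_ne x 0 with rfl | hx0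
    · ring
    have heq := hcon x hx hx0
    have hsub : m ^ 2 ≤ Ideal.span {x * x} + (Ideal.span {x}).annihilator := by
      rw [pow_two, heq]
      refine Ideal.mul_le.2 ?_
      intro r hr s hs
      rcases Submodule.mem_sup.1 hr with ⟨a, ha, t, ht, rfl⟩
      rcases Submodule.mem_sup.1 hs with ⟨b, hb, u, hu, rfl⟩
      obtain ⟨c, rfl⟩ := Ideal.mem_span_singleton'.1 ha
      obtain ⟨d, rfl⟩ := Ideal.mem_span_singleton'.1 hb
      have ht' : t * x = 0 := by
        simpa [smul_eq_mul] using (Submodule.mem_annihilator_span_singleton x t).1 ht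
      have hu' : u * x = 0 := by
        simpa [smul_eq_mul] using (Submodule.mem_annihilator_span_singleton x u).1 hu
      have hexp : (c * x + t) * (d * x + u)
          = c * d * (x * x) + (c * (u * x) + d * (t * x) + t * u) := by ring
      rw [hexp, ht', hu']
      simp only [mul_zero, zero_add]
      refine Submodule.add_mem_sup ?_ ?_
      · exact Ideal.mem_span_singleton'.2 ⟨c * d, rfl⟩
      · refine (Submodule.mem_annihilator_span_singleton x (t * u)).2 ?_
        have : t * u * x = t * (u * x) := by ring
        simp [smul_eq_mul, this, hu']
    have hx2 : x ∈ m ^ 2 := h2 ▸ hx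
    rcases Submodule.mem_sup.1 (hsub hx2) with ⟨a, ha, t, ht, hxeq⟩
    obtain ⟨c, rfl⟩ := Ideal.mem_span_singleton'.1 ha
    have ht' : t * x = 0 := by
      simpa [smul_eq_mul] using (Submodule.mem_annihilator_span_singleton x t).1 ht
    -- x = c*(x*x) + t, so x*x = c*x*(x*x), hence (1 - c*x) * (x*x) = 0
    have hxx : (1 - c * x) * (x * x) = 0 := by
      linear_combination (-x) * hxeq + ht'
    have hunit : IsUnit (1 - c * x) := by
      apply IsLocalRing.isUnit_one_sub_self_of_mem_nonunits
      exact (IsLocalRing.mem_maximalIdeal (c * x)).1 (Ideal.mul_mem_left m c hx)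
    have hx20 : x * x = 0 := by
      obtain ⟨v, hv⟩ := hunit
      have := congrArg (fun z => (↑v⁻¹ : R) * z) hxx
      simpa [← hv, ← mul_assoc] using this
    -- x ∈ Ann(x), hence m = span{x} + Ann = Ann
    have hxann : x ∈ (Ideal.span {x}).annihilator :=
      (Submodule.mem_annihilator_span_singleton x x).2 (by simp [smul_eq_mul, hx20])
    have hspan : Ideal.span {x} ≤ (Ideal.span {x}).annihilator :=
      (Ideal.span_singleton_le_iff_mem _).2 hxann
    have hmann : m ≤ (Ideal.span {x}).annihilator := by
      rw [heq]; exact sup_le hspan le_rfl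
    simpa [smul_eq_mul] using (Submodule.mem_annihilator_span_singleton x y).1 (hmann hy)
  have hmm : m * m ≤ ⊥ := by
    refine Ideal.mul_le.2 fun y hy z hz => ?_
    exact Ideal.mem_bot.2 (key z hz y hy)
  apply hne
  rw [← hm] at *
  have : m ≤ ⊥ := by rw [h2, pow_two]; exact hmm
  exact le_bot_iff.1 this
end

section
/- Let (R, m) be a commutative local ring with m = m², and let x ∈ m be nonzero with m ≠ (x) + Ann(x). Then there exists a sequence x₁, x₂, ... ∈ m such that for every n, the product x₁⋯xₙ ∉ (x) + Ann(x). -/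
/-!
Write `I = (x) + Ann(x)`. Since `m = m²`, every element of `m` is a sum of products `a * b`
with `a, b ∈ m`; hence if `p * m ⊄ I` then `(p * a) * m ⊄ I` for some `a ∈ m`. As `x ≠ 0`
lies in `m`, `I` is proper, so `I ⊊ m` and the step can be iterated forever starting from
`1 * m ⊄ I`; finally `x₁ ⋯ xₙ * m ⊄ I` forces `x₁ ⋯ xₙ ∉ I`.
-/

open Ideal IsLocalRing

theorem Finset.exists_seq_forall_prod_range {M : Type*} [CommMonoid M] (S : Set M)
    (P : M → Prop) (h1 : P 1) (hstep : ∀ p, P p → ∃ a ∈ S, P (p * a)) :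
    ∃ a : ℕ → M, (∀ i, a i ∈ S) ∧ ∀ n, P (∏ i ∈ Finset.range n, a i) := by
  choose f hfS hfP using hstep
  let q : ℕ → {p // P p} := fun n => Nat.rec ⟨1, h1⟩ (fun _ p => ⟨p * f p p.2, hfP p p.2⟩) n
  refine ⟨fun n => f (q n).1 (q n).2, fun n => hfS (q n).1 (q n).2, fun n => ?_⟩
  suffices ∏ i ∈ Finset.range n, f (q i).1 (q i).2 = (q n).1 by rw [this]; exact (q n).2
  induction n with
  | zero => rfl
  | succ n ih => rw [Finset.prod_range_succ, ih]

theorem Ideal.exists_mem_not_span_singleton_mul_le {R : Type*} [CommSemiring R]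
    {I J : Ideal R} (hJ : J ≤ J ^ 2) {p : R} (hp : ¬ span {p} * J ≤ I) :
    ∃ a ∈ J, ¬ span {p * a} * J ≤ I := by
  contrapose! hp
  calc span {p} * J ≤ span {p} * J * J := by rw [mul_assoc, ← sq]; exact mul_mono_right hJ
    _ ≤ I := mul_le.mpr fun r hr s hs => by
        obtain ⟨a, ha, rfl⟩ := mem_span_singleton_mul.mp hr
        exact span_singleton_mul_le_iff.mp (hp a ha) s hs

theorem IsLocalRing.span_singleton_sup_annihilator_le_maximalIdeal {R : Type*} [CommRing R]
    [IsLocalRing R] {x : R} (hx : x ∈ maximalIdeal R) (hx0 : x ≠ 0) :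
    span {x} + (span {x}).annihilator ≤ maximalIdeal R := by
  refine le_maximalIdeal fun htop => hx0 ?_
  obtain ⟨u, hu, v, hv, huv⟩ := Submodule.mem_sup.mp (htop ▸ Submodule.mem_top : (1 : R) ∈ _)
  have hvx : v * x = 0 := by
    simpa using Submodule.mem_annihilator.mp hv x (mem_span_singleton_self x)
  -- `x = x * (u + v) = x * u`, and `1 - u` is a unit because `u ∈ (x) ⊆ m`.
  have hux : x * (1 - u) = 0 := by linear_combination -x * huv + hvx
  have hunit : IsUnit (1 - u) :=
    isUnit_one_sub_self_of_mem_nonunits u ((span_singleton_le_iff_mem _).mpr hx hu)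
  simpa [hunit.mul_left_eq_zero] using hux

/-- If `(R, m)` is local with `m = m²` and `x ∈ m` is nonzero with
`m ≠ (x) + Ann(x)`, then there is a sequence `x₁, x₂, … ∈ m` such that for every
`n`, the product `x₁⋯xₙ ∉ (x) + Ann(x)`. -/
theorem stmt10 {R : Type*} [CommRing R] [IsLocalRing R]
    (h2 : IsLocalRing.maximalIdeal R = (IsLocalRing.maximalIdeal R) ^ 2)
    (x : R) (hx : x ∈ IsLocalRing.maximalIdeal R) (hx0 : x ≠ 0)
    (hxm : IsLocalRing.maximalIdeal R ≠ Ideal.span {x} + (Ideal.span {x}).annihilator) :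
    ∃ xs : ℕ → R, (∀ i, xs i ∈ IsLocalRing.maximalIdeal R) ∧
      ∀ n : ℕ, (∏ i ∈ Finset.range (n + 1), xs i) ∉
        Ideal.span {x} + (Ideal.span {x}).annihilator := by
  set I := span {x} + (span {x}).annihilator
  have hmI : ¬ maximalIdeal R ≤ I := fun h =>
    hxm (le_antisymm h (span_singleton_sup_annihilator_le_maximalIdeal hx hx0))
  obtain ⟨xs, hxs, hprod⟩ := Finset.exists_seq_forall_prod_range (maximalIdeal R)
    (fun p => ¬ span {p} * maximalIdeal R ≤ I) (by simpa using hmI)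
    fun _ hp => exists_mem_not_span_singleton_mul_le h2.le hp
  exact ⟨xs, hxs, fun n hn =>
    hprod (n + 1) (mul_le_left.trans ((span_singleton_le_iff_mem _).mpr hn))⟩
end

section
/- Let R be a commutative local principal ideal ring with maximal ideal m = (t), and suppose t is not nilpotent. If w ∈ ⋂_{n>0} mⁿ and t^k ∈ (w) + Ann(w) for some k, then t^k w = 0. -/
/-- Let `R` be a local principal ideal ring with maximal ideal `m = (t)`, `t` not
nilpotent. If `w ∈ ⋂_{n>0} mⁿ` and `t^k ∈ (w) + Ann(w)` for some `k`, then
`t^k * w = 0`. -/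
theorem stmt11 {R : Type*} [CommRing R] [IsLocalRing R] [IsPrincipalIdealRing R]
    (t : R) (ht : IsLocalRing.maximalIdeal R = Ideal.span {t})
    (hnil : ¬ IsNilpotent t) :
    ∀ w ∈ ⨅ n : ℕ, (IsLocalRing.maximalIdeal R) ^ (n + 1),
      ∀ k : ℕ, t ^ k ∈ Ideal.span {w} + (Ideal.span {w}).annihilator →
        t ^ k * w = 0 := by
  intro w hw k hk
  have hwm : w ∈ (IsLocalRing.maximalIdeal R) ^ (k + 1) :=
    Ideal.mem_iInf.mp hw k
  rw [ht, Ideal.span_singleton_pow, Ideal.mem_span_singleton] at hwm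
  obtain ⟨c, hc⟩ := hwm
  rw [Submodule.add_eq_sup, Submodule.mem_sup] at hk
  obtain ⟨y, hy, z, hz, hyz⟩ := hk
  obtain ⟨a, ha⟩ := Ideal.mem_span_singleton.mp hy
  have hzw : z * w = 0 := by
    simpa using
      Submodule.mem_annihilator.mp hz w (Ideal.mem_span_singleton_self w)
  have key : (1 - a * (t * c)) * (t ^ k * w) = 0 := by
    have h1 : t ^ k * w = a * (w * w) := by
      linear_combination (-w) * hyz + w * ha + hzw
    have h2 : a * (t * c) * (t ^ k * w) = a * (w * w) := by
      rw [hc]; ring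
    rw [sub_mul, one_mul, h2, h1, sub_self]
  have hmem : a * (t * c) ∈ IsLocalRing.maximalIdeal R := by
    rw [ht]
    exact Ideal.mul_mem_left _ a (Ideal.mul_mem_right c _
      (Ideal.subset_span rfl))
  have hunit : IsUnit (1 - a * (t * c)) := by
    by_contra h
    have h1 : (1 : R) - a * (t * c) ∈ IsLocalRing.maximalIdeal R := h
    have : (1 : R) ∈ IsLocalRing.maximalIdeal R := by
      have := Ideal.add_mem _ h1 hmem
      simpa using this
    exact (IsLocalRing.maximalIdeal.isMaximal R).ne_top (Ideal.eq_top_of_isUnit_mem _ this isUnit_one)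
  exact (IsUnit.mul_right_eq_zero hunit).mp key
end

section
/- Let R be a commutative ring, p ⊆ R a finitely generated maximal ideal with R_p a principal ideal ring, and m ≥ 1. If M is an R/p^m-module such that every x ∈ M with p^{m-1}x = 0 lies in pM, then M is a free R/p^m-module. -/
/-!
The maximal ideal of `A = R ⧸ p ^ m` is principal, say `(π)`, because `A` is a quotient of the
principal ideal ring `R_p`; moreover `π ^ m = 0`. Lift a basis of `M ⧸ πM` over the residue field
to a linear map `g : A^(ι) → M`. It is surjective by Nakayama's lemma for the nilpotent ideal
`(π)`. It is injective: if `g (π ^ k • z) = 0` with `k < m`, then `g z` is killed by `π ^ (m - 1)`,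
so `g z ∈ πM` by hypothesis, whence `z ∈ π A^(ι)` as the basis stays independent modulo `π`;
by induction the kernel of `g` lies in `π ^ m A^(ι) = 0`.
-/

universe u

open Submodule Pointwise

variable {A : Type*} [CommRing A] {M F : Type*} [AddCommGroup M] [Module A M]
  [AddCommGroup F] [Module A F]

theorem Submodule.eq_top_of_sup_smul_top_eq_top {I : Ideal A} {n : ℕ} (hI : I ^ n = ⊥)
    {N : Submodule A M} (h : N ⊔ I • ⊤ = ⊤) : N = ⊤ := by
  have key (k : ℕ) : N ⊔ I ^ k • ⊤ = ⊤ := by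
    induction k with
    | zero => simp
    | succ k ih =>
      refine top_unique ?_
      calc (⊤ : Submodule A M) = N ⊔ I ^ k • (N ⊔ I • ⊤) := by rw [h, ih]
        _ = N ⊔ I ^ k • N ⊔ I ^ (k + 1) • ⊤ := by
          rw [smul_sup, ← sup_assoc, pow_succ, mul_smul]
        _ ≤ N ⊔ I ^ (k + 1) • ⊤ := sup_le_sup_right (sup_le le_rfl smul_le_right) _
  simpa [hI] using key n

theorem LinearMap.surjective_of_surjective_comp_mkQ_of_pow_eq_bot (g : F →ₗ[A] M) {I : Ideal A}
    {n : ℕ} (hI : I ^ n = ⊥) (surj : Function.Surjective ((I • (⊤ : Submodule A M)).mkQ ∘ₗ g)) :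
    Function.Surjective g := by
  rw [← LinearMap.range_eq_top]
  refine eq_top_of_sup_smul_top_eq_top hI ?_
  rw [sup_comm, ← map_mkQ_eq_top, ← LinearMap.range_comp]
  exact LinearMap.range_eq_top_of_surjective _ surj

theorem LinearMap.injective_of_comap_smul_top_le {π : A} {m : ℕ} (hπ : π ^ m = 0)
    (htor : ∀ x : M, π ^ (m - 1) • x = 0 → x ∈ π • (⊤ : Submodule A M)) (g : F →ₗ[A] M)
    (hg : (π • ⊤ : Submodule A M).comap g ≤ π • ⊤) : Function.Injective g := by
  have key (k : ℕ) : k ≤ m → LinearMap.ker g ≤ π ^ k • ⊤ := by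
    induction k with
    | zero => simp
    | succ k ih =>
      intro hk y hy
      obtain ⟨z, -, rfl⟩ := (mem_smul_pointwise_iff_exists _ _ _).mp (ih (by omega) hy)
      have hgz : π ^ (m - 1) • g z = 0 := by
        rw [← Nat.sub_add_cancel (show k ≤ m - 1 by omega), pow_add, mul_smul, ← map_smul,
          LinearMap.mem_ker.mp hy, smul_zero]
      obtain ⟨w, -, rfl⟩ := (mem_smul_pointwise_iff_exists _ _ _).mp (hg (htor _ hgz))
      rw [smul_smul, ← pow_succ]
      exact smul_mem_pointwise_smul _ _ _ trivial
  rw [← LinearMap.ker_eq_bot, eq_bot_iff]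
  simpa [hπ] using key m le_rfl

theorem Module.free_of_pow_eq_zero_of_torsion_le_smul_top {π : A} [(Ideal.span {π}).IsMaximal]
    {m : ℕ} (hπ : π ^ m = 0) (htor : ∀ x : M, π ^ (m - 1) • x = 0 → x ∈ π • (⊤ : Submodule A M)) :
    Module.Free A M := by
  let I := Ideal.span {π}
  let := Ideal.Quotient.field I
  obtain ⟨⟨ι, b⟩⟩ := Module.Free.exists_basis (A ⧸ I) (QuotSMulTop π M)
  let f : (ι →₀ A) →ₗ[A] QuotSMulTop π M :=
    (b.repr.restrictScalars A).symm.toLinearMap ∘ₗ Finsupp.mapRange.linearMap I.mkQ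
  have hf : LinearMap.ker f = π • ⊤ := by
    simp only [f, LinearEquiv.ker_comp]
    rw [Finsupp.ker_mapRange, ker_mkQ, ← I.mul_top, ← smul_eq_mul,
      Finsupp.submodule_smul]
    simp [I, ideal_span_singleton_smul]
  have f_surj : Function.Surjective f :=
    (b.repr.restrictScalars A).symm.surjective.comp
      (Finsupp.mapRange_surjective _ (map_zero _) I.mkQ_surjective)
  obtain ⟨g, hg⟩ := Module.projective_lifting_property (π • ⊤ : Submodule A M).mkQ f
    (mkQ_surjective _)
  have hI : I ^ m = ⊥ := by
    rw [Ideal.span_singleton_pow, hπ, Ideal.span_singleton_eq_bot]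
  have g_surj : Function.Surjective g := by
    refine g.surjective_of_surjective_comp_mkQ_of_pow_eq_bot hI ?_
    rwa [ideal_span_singleton_smul, hg]
  have g_inj : Function.Injective g := by
    refine g.injective_of_comap_smul_top_le hπ htor fun x hx => ?_
    rw [← hf, ← hg, LinearMap.mem_ker, LinearMap.comp_apply, mkQ_apply,
      Quotient.mk_eq_zero]
    exact hx
  exact Module.Free.of_equiv (LinearEquiv.ofBijective g ⟨g_inj, g_surj⟩)

theorem Ideal.isPrincipal_map_quotient_pow {R : Type*} [CommRing R] (p : Ideal R) [p.IsMaximal]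
    [IsPrincipalIdealRing (Localization.AtPrime p)] (m : ℕ) :
    (p.map (Ideal.Quotient.mk (p ^ m))).IsPrincipal := by
  let φ : Localization.AtPrime p →+* R ⧸ p ^ m := IsLocalization.lift (M := p.primeCompl)
    fun s => Ideal.Quotient.isUnit_mk_pow_of_notMem p s.2
  have hφ : φ.comp (algebraMap R _) = Ideal.Quotient.mk (p ^ m) := IsLocalization.lift_comp _
  rw [← hφ, ← Ideal.map_map]
  exact (IsPrincipalIdealRing.principal _).map_ringHom φ

theorem stmt15_general {R : Type u} [CommRing R] (p : Ideal R) [p.IsMaximal]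
    (hpir : IsPrincipalIdealRing (Localization.AtPrime p))
    (m : ℕ) (hm : 1 ≤ m)
    (M : Type u) [AddCommGroup M] [Module (R ⧸ p ^ m) M]
    (hM : ∀ x : M, (∀ a ∈ p ^ (m - 1), (Ideal.Quotient.mk (p ^ m) a) • x = 0) →
      x ∈ (p.map (Ideal.Quotient.mk (p ^ m))) •
        (⊤ : Submodule (R ⧸ p ^ m) M)) :
    Module.Free (R ⧸ p ^ m) M := by
  obtain ⟨π, hπ⟩ := p.isPrincipal_map_quotient_pow m
  rw [Ideal.submodule_span_eq] at hπ
  have : (Ideal.span {π}).IsMaximal := hπ ▸ Ideal.IsMaximal.map_of_surjective_of_ker_le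
    Ideal.Quotient.mk_surjective (by simpa using Ideal.pow_le_self (by omega))
  have hpow : ∀ k, (p ^ k).map (Ideal.Quotient.mk (p ^ m)) = Ideal.span {π ^ k} := by
    intro k
    rw [Ideal.map_pow, hπ, Ideal.span_singleton_pow]
  refine Module.free_of_pow_eq_zero_of_torsion_le_smul_top (π := π) (m := m) ?_ fun x hx => ?_
  · rw [← Ideal.span_singleton_eq_bot, ← hpow, Ideal.map_quotient_self]
  · rw [← ideal_span_singleton_smul, ← hπ]
    refine hM x fun a ha => ?_
    obtain ⟨c, hc⟩ := Ideal.mem_span_singleton'.mp (hpow (m - 1) ▸ Ideal.mem_map_of_mem _ ha)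
    rw [← hc, mul_smul, hx, smul_zero]

/-- Let `p` be a finitely generated maximal ideal with `R_p` a principal ideal
ring, and `m ≥ 1`. If `M` is an `R/p^m`-module whose `p^{m-1}`-torsion is
contained in `pM`, then `M` is a free `R/p^m`-module. -/
theorem stmt15 {R : Type u} [CommRing R] (p : Ideal R) [p.IsMaximal] (hfg : p.FG)
    (hpir : IsPrincipalIdealRing (Localization.AtPrime p))
    (m : ℕ) (hm : 1 ≤ m)
    (M : Type u) [AddCommGroup M] [Module (R ⧸ p ^ m) M]
    (hM : ∀ x : M, (∀ a ∈ p ^ (m - 1), (Ideal.Quotient.mk (p ^ m) a) • x = 0) →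
      x ∈ (p.map (Ideal.Quotient.mk (p ^ m))) •
        (⊤ : Submodule (R ⧸ p ^ m) M)) :
    Module.Free (R ⧸ p ^ m) M :=
  stmt15_general p hpir m hm M hM
end

section
/- Let R be an integral domain such that every localization of R at a prime ideal is a principal ideal ring and V(x) = {p ∈ Spec R : x ∈ p} is finite for every nonzero x ∈ R. Then R is a Dedekind domain. -/
/-!
A nonzero ideal `I` is finitely generated: pick `0 ≠ x ∈ I`. At each of the finitely many maximal
ideals `P ∋ x` the localization `I_P` is principal, generated by the image of some `a_P ∈ I`,
and at every other maximal ideal `x` is a unit. Hence `(x, a_P : x ∈ P)` and `I` agree locally,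
so they are equal. Being Noetherian with localizations at nonzero primes that are local PIDs
other than fields, i.e. DVRs, the domain is Dedekind.
-/

open IsLocalRing

theorem IsLocalization.exists_mem_map_eq_span_singleton {R : Type*} [CommRing R]
    (S : Submonoid R) {A : Type*} [CommRing A] [Algebra R A] [IsLocalization S A]
    [IsPrincipalIdealRing A] (I : Ideal R) :
    ∃ a ∈ I, I.map (algebraMap R A) = Ideal.span {algebraMap R A a} := by
  obtain ⟨g, hg⟩ := (IsPrincipalIdealRing.principal (I.map (algebraMap R A))).principal
  have hgI : g ∈ I.map (algebraMap R A) := hg ▸ Ideal.mem_span_singleton_self g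
  obtain ⟨⟨⟨a, haI⟩, s⟩, hgs⟩ := (IsLocalization.mem_map_algebraMap_iff S A).mp hgI
  refine ⟨a, haI, ?_⟩
  rw [hg, ← hgs, Ideal.span_singleton_mul_right_unit (IsLocalization.map_units A s)]

theorem isNoetherianRing_of_isPrincipalIdealRing_localization {R : Type*} [CommRing R]
    (hpid : ∀ (P : Ideal R) [P.IsMaximal], IsPrincipalIdealRing (Localization.AtPrime P))
    (hfin : ∀ x : R, x ≠ 0 → {P : MaximalSpectrum R | x ∈ P.asIdeal}.Finite) :
    IsNoetherianRing R := by
  refine (isNoetherianRing_iff_ideal_fg R).mpr fun I => ?_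
  rcases eq_or_ne I ⊥ with rfl | hI
  · exact Submodule.fg_bot
  obtain ⟨x, hxI, hx⟩ := Submodule.exists_mem_ne_zero_of_ne_bot hI
  choose a haI hspan using fun P : MaximalSpectrum R =>
    have := hpid P.asIdeal
    IsLocalization.exists_mem_map_eq_span_singleton P.asIdeal.primeCompl
      (A := Localization.AtPrime P.asIdeal) I
  set V := {P : MaximalSpectrum R | x ∈ P.asIdeal}
  set J := Ideal.span (insert x (a '' V))
  have hJI : J ≤ I := by
    rw [Ideal.span_le]
    rintro y (rfl | ⟨P, -, rfl⟩)
    exacts [hxI, haI P]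
  have hIJ : I ≤ J := by
    refine Ideal.le_of_localization_maximal fun P hP => ?_
    by_cases hxP : x ∈ P
    · rw [hspan ⟨P, hP⟩, Ideal.span_singleton_le_iff_mem]
      exact Ideal.mem_map_of_mem _ (Ideal.subset_span (Set.mem_insert_of_mem _ ⟨_, hxP, rfl⟩))
    · have hunit : IsUnit (algebraMap R (Localization.AtPrime P) x) :=
        IsLocalization.map_units _ (⟨x, hxP⟩ : P.primeCompl)
      rw [Ideal.eq_top_of_isUnit_mem _
        (Ideal.mem_map_of_mem _ (Ideal.subset_span (Set.mem_insert x _))) hunit]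
      exact le_top
  rw [le_antisymm hIJ hJI]
  exact Submodule.fg_span (((hfin x hx).image a).insert x)

theorem isDiscreteValuationRing_localization_atPrime {R : Type*} [CommRing R] [IsDomain R]
    {P : Ideal R} [P.IsPrime] (hP : P ≠ ⊥) [IsPrincipalIdealRing (Localization.AtPrime P)] :
    IsDiscreteValuationRing (Localization.AtPrime P) where
  not_a_field' := isField_iff_maximalIdeal_eq.not.mp
    (IsLocalization.AtPrime.not_isField R hP (Localization.AtPrime P))

/-- An integral domain all of whose localizations at primes are principal ideal
rings and such that `V(x)` is finite for every nonzero `x` is a Dedekind domain. -/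
theorem stmt19 {R : Type*} [CommRing R] [IsDomain R]
    (h1 : ∀ (p : Ideal R) [p.IsPrime], IsPrincipalIdealRing (Localization.AtPrime p))
    (h2 : ∀ x : R, x ≠ 0 → {p : PrimeSpectrum R | x ∈ p.asIdeal}.Finite) :
    IsDedekindDomain R := by
  have : IsNoetherianRing R :=
    isNoetherianRing_of_isPrincipalIdealRing_localization (fun P _ => h1 P)
      fun x hx => (h2 x hx).preimage MaximalSpectrum.toPrimeSpectrum_injective.injOn
  have : IsDedekindDomainDvr R :=
    { is_dvr_at_nonzero_prime := fun P hP _ =>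
        have := h1 P
        isDiscreteValuationRing_localization_atPrime hP }
  exact IsDedekindDomainDvr.isDedekindDomain R
end
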